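/- arXiv:1209.0936 — 2 statements merged into one kernel-verified Lean document; each statement's English description precedes it below -/
import Mathlib

section
/- Let n ≥ 1 and, for every prime p, let K_p be a compact open subgroup of GL_n(ℚ_p), with K_p = GL_n(ℤ_p) for all but finitely many p, so that K = ∏_p K_p is a compact open subgroup of GL_n(A_f), where A_f denotes the ring of finite adèles of ℚ. Then for every prime number l there exists an open subgroup K'_l of K_l such that the subgroup K' = K'_l × ∏_{p ≠ l} K_p of GL_n(A_f) is neat. -/
open Polynomial

instance (p : Nat.Primes) : Fact (p : ℕ).Prime := ⟨p.2⟩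

/-- The subgroup `Eig_p(g)` of `ℚ̄_p^×` generated by the eigenvalues (in a fixed
algebraic closure `ℚ̄_p` of `ℚ_p`) of a matrix `g` with coefficients in `ℚ_p`, i.e. by
the units of `ℚ̄_p` that are roots of the characteristic polynomial of `g`. -/
noncomputable def eigenvalueGroup (n : ℕ) (p : Nat.Primes)
    (g : Matrix (Fin n) (Fin n) ℚ_[(p : ℕ)]) : Subgroup (AlgebraicClosure ℚ_[(p : ℕ)])ˣ :=
  Subgroup.closure
    {x : (AlgebraicClosure ℚ_[(p : ℕ)])ˣ |
      (g.charpoly.map (algebraMap ℚ_[(p : ℕ)] (AlgebraicClosure ℚ_[(p : ℕ)]))).IsRoot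
        (x : AlgebraicClosure ℚ_[(p : ℕ)])}

/-- An element `g = (g_p)_p` of `GL_n(A_f) = ∏'_p GL_n(ℚ_p)` is *neat* (with respect to a
fixed family of embeddings `ι_p : ℚ̄ → ℚ̄_p`) if the intersection over all primes `p` of
the torsion subgroups of `ℚ̄^× ∩ Eig_p(g_p)` is trivial. -/
def IsNeatElem (n : ℕ)
    (ι : ∀ p : Nat.Primes, AlgebraicClosure ℚ →+* AlgebraicClosure ℚ_[(p : ℕ)])
    (g : ∀ p : Nat.Primes, (Matrix (Fin n) (Fin n) ℚ_[(p : ℕ)])ˣ) : Prop :=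
  ∀ x : (AlgebraicClosure ℚ)ˣ, IsOfFinOrder x →
    (∀ p : Nat.Primes,
      x ∈ (eigenvalueGroup n p ((g p : (Matrix (Fin n) (Fin n) ℚ_[(p : ℕ)])ˣ) :
        Matrix (Fin n) (Fin n) ℚ_[(p : ℕ)])).comap (Units.map (ι p).toMonoidHom)) →
    x = 1

/-- The subgroup `GL_n(ℤ_p)` of `GL_n(ℚ_p)`, i.e. the image of the map on units induced
by the inclusion `ℤ_p → ℚ_p`. -/
noncomputable def glZp (n : ℕ) (p : Nat.Primes) :
    Subgroup (Matrix (Fin n) (Fin n) ℚ_[(p : ℕ)])ˣ :=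
  (Units.map (RingHom.mapMatrix
    (algebraMap ℤ_[(p : ℕ)] ℚ_[(p : ℕ)])).toMonoidHom).range


/-!
Take `K'_l = K_l ∩ Γ(l²)`, with `Γ(l²)` the principal congruence subgroup of level `l²`.
If `u ∈ Γ(l²)` and `ζ` is an eigenvalue of `u`, then `(ζ - 1)/l²` is an eigenvalue of
`(u - 1)/l² ∈ M_n(ℤ_l)`, hence integral over `ℤ_l`, and these `ζ` form a group. A root of
unity `ζ ≠ 1` of prime order `q` in this group gives
`q = ∑_{i<q} (1 - ζ^i) = (ζ - 1) · (integral) ∈ l² · (integral)`, so `q / l² ∈ ℤ_l`,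
which is absurd. So already `Eig_l(g_l)` contains no nontrivial root of unity.
-/

section OneAddSMul

variable {R A : Type*} [CommRing R] [Ring A] [Algebra R A]

def oneAddSMulSubmonoid (S : Subalgebra R A) (c : R) : Submonoid A where
  carrier := {x | ∃ s ∈ S, x = 1 + c • s}
  one_mem' := ⟨0, S.zero_mem, by simp⟩
  mul_mem' := by
    rintro _ _ ⟨s, hs, rfl⟩ ⟨t, ht, rfl⟩
    refine ⟨s + t + c • (s * t), add_mem (add_mem hs ht) (S.smul_mem (mul_mem hs ht) c), ?_⟩
    simp only [mul_add, add_mul, one_mul, mul_one, smul_mul_smul_comm, smul_add, smul_smul]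
    abel

theorem coe_oneAddSMulSubmonoid_eq_preimage {K : Type*} [Field K] [Algebra R K] [Algebra K A]
    [IsScalarTower R K A] (S : Subalgebra R A) {c : R} (hc : algebraMap R K c ≠ 0) :
    (oneAddSMulSubmonoid S c : Set A) = (fun x ↦ (algebraMap R K c)⁻¹ • (x - 1)) ⁻¹' S := by
  ext x
  constructor
  · rintro ⟨s, hs, rfl⟩
    rwa [Set.mem_preimage, add_sub_cancel_left, ← algebraMap_smul K c, smul_smul,
      inv_mul_cancel₀ hc, one_smul]
  · intro hx
    refine ⟨_, hx, ?_⟩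
    rw [← algebraMap_smul K c, smul_smul, mul_inv_cancel₀ hc, one_smul, add_sub_cancel]

end OneAddSMul

theorem Matrix.isRoot_charpoly_of_isRoot_charpoly_one_add_smul {L n : Type*} [Field L]
    [Fintype n] [DecidableEq n] {c : L} (hc : c ≠ 0) (B : Matrix n n L) {ζ : L}
    (hζ : (1 + c • B).charpoly.IsRoot ζ) :
    B.charpoly.IsRoot (c⁻¹ * (ζ - 1)) := by
  have hscalar : scalar n ζ - (1 + c • B) = c • (scalar n (c⁻¹ * (ζ - 1)) - B) := by
    simp only [scalar_apply, ← smul_one_eq_diagonal, smul_sub, smul_smul,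
      mul_inv_cancel_left₀ hc, sub_smul, one_smul]
    abel
  rw [IsRoot, eval_charpoly, hscalar, det_smul] at hζ
  rw [IsRoot, eval_charpoly]
  exact (mul_eq_zero.mp hζ).resolve_left (pow_ne_zero _ hc)

theorem Matrix.isRoot_charpoly_map_inv {K L n : Type*} [CommRing K] [Field L] [Algebra K L]
    [Fintype n] [DecidableEq n] (u : (Matrix n n K)ˣ) {ζ : Lˣ}
    (hζ : ((u : Matrix n n K).charpoly.map (algebraMap K L)).IsRoot ζ) :
    ((↑u⁻¹ : Matrix n n K).charpoly.map (algebraMap K L)).IsRoot ↑ζ⁻¹ := by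
  let v := Units.map (algebraMap K L).mapMatrix.toMonoidHom u
  rw [← charpoly_map, ← mem_spectrum_iff_isRoot_charpoly] at hζ ⊢
  exact spectrum.inv_mem_iff (a := v) |>.mp hζ

section IntegralClosure

variable {R L : Type*} [CommRing R] [Field L] [Algebra R L]

theorem exists_natCast_eq_smul_of_pow_eq_one {c : R} {ζ : L}
    (hζ : ζ ∈ oneAddSMulSubmonoid (integralClosure R L) c) {q : ℕ} (hq : ζ ^ q = 1)
    (hζ1 : ζ ≠ 1) : ∃ t ∈ integralClosure R L, (q : L) = c • t := by
  obtain ⟨s, hs, rfl⟩ := hζ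
  set T := ∑ i ∈ Finset.range q, ∑ j ∈ Finset.range i, (1 + c • s) ^ j
  have hgeom : ∑ i ∈ Finset.range q, (1 + c • s) ^ i = 0 := by
    have := geom_sum_mul (1 + c • s) q
    rw [hq, sub_self] at this
    exact (mul_eq_zero.mp this).resolve_right (sub_ne_zero.mpr hζ1)
  have hT : T * (c • s) = -q := by
    have := Finset.sum_congr rfl fun i (_ : i ∈ Finset.range q) ↦ geom_sum_mul (1 + c • s) i
    simp only [add_sub_cancel_left, ← Finset.sum_mul, Finset.sum_sub_distrib, hgeom] at this
    simpa using this
  have hζint : IsIntegral R (1 + c • s) := isIntegral_one.add (hs.smul c)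
  refine ⟨-(T * s), neg_mem (mul_mem ?_ hs), ?_⟩
  · exact Subalgebra.sum_mem _ fun i _ ↦ Subalgebra.sum_mem _ fun j _ ↦ pow_mem hζint j
  · rw [smul_neg, ← mul_smul_comm, hT, neg_neg]

theorem mem_oneAddSMulSubmonoid_of_isRoot_charpoly {K n : Type*} [CommRing K] [Algebra R K]
    [Algebra K L] [IsScalarTower R K L] [Fintype n] [DecidableEq n]
    {c : R} (hc : algebraMap R L c ≠ 0) {u : Matrix n n K}
    (hu : u ∈ oneAddSMulSubmonoid (AlgHom.mapMatrix (Algebra.ofId R K)).range c) {ζ : L}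
    (hζ : (u.charpoly.map (algebraMap K L)).IsRoot ζ) :
    ζ ∈ oneAddSMulSubmonoid (integralClosure R L) c := by
  obtain ⟨_, ⟨a, rfl⟩, rfl⟩ := hu
  have hmap : (1 + c • (AlgHom.mapMatrix (Algebra.ofId R K)) a).map (algebraMap K L)
      = 1 + algebraMap R L c • a.map (algebraMap R L) := by
    ext i j
    simp only [Matrix.map_apply, Matrix.add_apply, Matrix.smul_apply, AlgHom.mapMatrix_apply]
    simp [Matrix.one_apply, apply_ite (algebraMap K L), Algebra.smul_def,
      ← IsScalarTower.algebraMap_apply]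
  rw [← Matrix.charpoly_map, AlgHom.toRingHom_eq_coe, RingHom.coe_coe, hmap] at hζ
  have hroot := Matrix.isRoot_charpoly_of_isRoot_charpoly_one_add_smul hc _ hζ
  rw [Matrix.charpoly_map] at hroot
  refine ⟨_, ⟨a.charpoly, a.charpoly_monic, by rwa [eval₂_eq_eval_map]⟩, ?_⟩
  rw [Algebra.smul_def, mul_inv_cancel_left₀ hc, add_sub_cancel]

end IntegralClosure

theorem PadicInt.not_isIntegral_natCast_div_sq (p : ℕ) [Fact p.Prime] {q : ℕ} (hq : q.Prime) :
    ¬ IsIntegral ℤ_[p] ((q : ℚ_[p]) / (p : ℚ_[p]) ^ 2) := by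
  intro h
  obtain ⟨d, hd⟩ := IsIntegrallyClosed.isIntegral_iff.mp h
  have hdvd : (p : ℤ_[p]) ^ 2 ∣ ((q : ℤ) : ℤ_[p]) := by
    refine ⟨d, PadicInt.ext ?_⟩
    rw [PadicInt.algebraMap_apply] at hd
    have : (p : ℚ_[p]) ≠ 0 := by exact_mod_cast (Fact.out : p.Prime).ne_zero
    push_cast
    rw [hd]
    field_simp
  rw [PadicInt.pow_p_dvd_int_iff] at hdvd
  norm_cast at hdvd
  rcases hq.eq_one_or_self_of_dvd _ hdvd with h1 | hpq
  · exact (Fact.out : p.Prime).one_lt.ne' (Nat.pow_eq_one.mp h1 |>.resolve_right (by norm_num))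
  · exact Nat.Prime.not_prime_pow le_rfl (hpq ▸ hq)

section Padic

variable (p : ℕ) [Fact p.Prime]

theorem eq_one_of_isOfFinOrder_of_mem_oneAddSMulSubmonoid {L : Type*} [Field L]
    [Algebra ℚ_[p] L] [Algebra ℤ_[p] L] [IsScalarTower ℤ_[p] ℚ_[p] L] {ζ : Lˣ}
    (hζ : (ζ : L) ∈ oneAddSMulSubmonoid (integralClosure ℤ_[p] L) ((p : ℤ_[p]) ^ 2))
    (hfin : IsOfFinOrder ζ) : ζ = 1 := by
  by_contra hne
  set q := (orderOf ζ).minFac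
  have hq : q.Prime := Nat.minFac_prime (orderOf_eq_one_iff.not.mpr hne)
  set η := ζ ^ (orderOf ζ / q)
  have hη : orderOf η = q := orderOf_pow_orderOf_div hfin.orderOf_pos.ne' (Nat.minFac_dvd _)
  have hηmem : (η : L) ∈ oneAddSMulSubmonoid (integralClosure ℤ_[p] L) ((p : ℤ_[p]) ^ 2) := by
    rw [Units.val_pow_eq_pow_val]; exact pow_mem hζ _
  have hηq : (η : L) ^ q = 1 := by
    rw [← Units.val_pow_eq_pow_val, ← hη, pow_orderOf_eq_one, Units.val_one]
  have hη1 : (η : L) ≠ 1 := fun h ↦ hq.one_lt.ne' (hη ▸ orderOf_eq_one_iff.mpr (Units.ext h))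
  obtain ⟨t, ht, hqt⟩ := exists_natCast_eq_smul_of_pow_eq_one hηmem hηq hη1
  have hp : (p : L) ≠ 0 := by
    rw [← map_natCast (algebraMap ℚ_[p] L)]
    exact (_root_.map_ne_zero _).mpr (by exact_mod_cast (Fact.out : p.Prime).ne_zero)
  have ht' : algebraMap ℚ_[p] L ((q : ℚ_[p]) / (p : ℚ_[p]) ^ 2) = t := by
    rw [map_div₀, map_pow, map_natCast, map_natCast, div_eq_iff (pow_ne_zero 2 hp), hqt,
      Algebra.smul_def, mul_comm]
    simp
  exact PadicInt.not_isIntegral_natCast_div_sq p hq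
    (IsIntegral.tower_bot (algebraMap ℚ_[p] L).injective (ht' ▸ ht))

/-- `{u | u, u⁻¹ ∈ 1 + c • M_n(ℤ_p)}`; for `c = p ^ k` this is the kernel of
`GL_n(ℤ_p) → GL_n(ℤ/p^k)`. -/
noncomputable def principalCongruenceSubgroup (n : Type*) [Fintype n] [DecidableEq n]
    (c : ℤ_[p]) : Subgroup (Matrix n n ℚ_[p])ˣ :=
  (oneAddSMulSubmonoid (AlgHom.mapMatrix (Algebra.ofId ℤ_[p] ℚ_[p]) :
    Matrix n n ℤ_[p] →ₐ[ℤ_[p]] Matrix n n ℚ_[p]).range c).units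

theorem isOpen_principalCongruenceSubgroup (n : Type*) [Fintype n] [DecidableEq n]
    {c : ℤ_[p]} (hc : c ≠ 0) :
    IsOpen (principalCongruenceSubgroup p n c : Set (Matrix n n ℚ_[p])ˣ) := by
  refine Submonoid.isOpen_units ?_
  rw [coe_oneAddSMulSubmonoid_eq_preimage (K := ℚ_[p]) _ (by simpa using hc), AlgHom.coe_range]
  exact (PadicInt.isOpenEmbedding_coe.matrix_map.isOpen_range).preimage (by fun_prop)

end Padic

theorem eigenvalueGroup_le_units_oneAddSMulSubmonoid (n : ℕ) (p : Nat.Primes)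
    {u : (Matrix (Fin n) (Fin n) ℚ_[(p : ℕ)])ˣ}
    (hu : u ∈ principalCongruenceSubgroup p (Fin n) (((p : ℕ) : ℤ_[(p : ℕ)]) ^ 2)) :
    eigenvalueGroup n p u ≤ (oneAddSMulSubmonoid (integralClosure ℤ_[(p : ℕ)]
      (AlgebraicClosure ℚ_[(p : ℕ)])) (((p : ℕ) : ℤ_[(p : ℕ)]) ^ 2)).units := by
  have hc : algebraMap _ (AlgebraicClosure ℚ_[(p : ℕ)]) (((p : ℕ) : ℤ_[(p : ℕ)]) ^ 2) ≠ 0 := by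
    simpa using p.2.ne_zero
  refine (Subgroup.closure_le _).mpr fun ζ hζ ↦ ⟨?_, ?_⟩
  · exact mem_oneAddSMulSubmonoid_of_isRoot_charpoly hc hu.1 hζ
  · exact mem_oneAddSMulSubmonoid_of_isRoot_charpoly hc hu.2 (Matrix.isRoot_charpoly_map_inv u hζ)

theorem stmt_2_general (n : ℕ)
    (ι : ∀ p : Nat.Primes, AlgebraicClosure ℚ →+* AlgebraicClosure ℚ_[(p : ℕ)])
    (K : ∀ p : Nat.Primes, Subgroup (Matrix (Fin n) (Fin n) ℚ_[(p : ℕ)])ˣ)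
    (hKopen : ∀ p : Nat.Primes,
      IsOpen (K p : Set (Matrix (Fin n) (Fin n) ℚ_[(p : ℕ)])ˣ)) :
    ∀ l : Nat.Primes, ∃ K'l : Subgroup (Matrix (Fin n) (Fin n) ℚ_[(l : ℕ)])ˣ,
      K'l ≤ K l ∧ IsOpen (K'l : Set (Matrix (Fin n) (Fin n) ℚ_[(l : ℕ)])ˣ) ∧
      ∀ g : ∀ p : Nat.Primes, (Matrix (Fin n) (Fin n) ℚ_[(p : ℕ)])ˣ,
        g l ∈ K'l → (∀ p : Nat.Primes, p ≠ l → g p ∈ K p) → IsNeatElem n ι g := by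
  intro l
  have hc : ((l : ℕ) : ℤ_[(l : ℕ)]) ^ 2 ≠ 0 := pow_ne_zero 2 (by exact_mod_cast l.2.ne_zero)
  refine ⟨K l ⊓ principalCongruenceSubgroup l (Fin n) (((l : ℕ) : ℤ_[(l : ℕ)]) ^ 2), inf_le_left,
    (hKopen l).inter (isOpen_principalCongruenceSubgroup _ _ hc), ?_⟩
  intro g hgl _ x hx hmem
  have hxl := eigenvalueGroup_le_units_oneAddSMulSubmonoid n l (Subgroup.mem_inf.mp hgl).2 (hmem l)
  have h1 := eq_one_of_isOfFinOrder_of_mem_oneAddSMulSubmonoid l hxl.1 (MonoidHom.isOfFinOrder _ hx)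
  exact Units.ext ((ι l).injective (by simpa using congrArg Units.val h1))

/-- Let `n ≥ 1` and, for every prime `p`, let `K_p` be a compact open subgroup of
`GL_n(ℚ_p)`, with `K_p = GL_n(ℤ_p)` for all but finitely many `p` (so that
`K = ∏_p K_p` is a compact open subgroup of `GL_n(A_f)`). Then for every prime `l`
there exists an open subgroup `K'_l` of `K_l` such that the subgroup
`K' = K'_l × ∏_{p ≠ l} K_p` of `GL_n(A_f)` is neat, i.e. every
`g = (g_p)_p` with `g_l ∈ K'_l` and `g_p ∈ K_p` for `p ≠ l` is a neat element. -/
theorem stmt_2 (n : ℕ) (hn : 1 ≤ n)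
    (ι : ∀ p : Nat.Primes, AlgebraicClosure ℚ →+* AlgebraicClosure ℚ_[(p : ℕ)])
    (K : ∀ p : Nat.Primes, Subgroup (Matrix (Fin n) (Fin n) ℚ_[(p : ℕ)])ˣ)
    (hKcompact : ∀ p : Nat.Primes,
      IsCompact (K p : Set (Matrix (Fin n) (Fin n) ℚ_[(p : ℕ)])ˣ))
    (hKopen : ∀ p : Nat.Primes,
      IsOpen (K p : Set (Matrix (Fin n) (Fin n) ℚ_[(p : ℕ)])ˣ))
    (hKint : {p : Nat.Primes | K p ≠ glZp n p}.Finite) :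
    ∀ l : Nat.Primes, ∃ K'l : Subgroup (Matrix (Fin n) (Fin n) ℚ_[(l : ℕ)])ˣ,
      K'l ≤ K l ∧ IsOpen (K'l : Set (Matrix (Fin n) (Fin n) ℚ_[(l : ℕ)])ˣ) ∧
      ∀ g : ∀ p : Nat.Primes, (Matrix (Fin n) (Fin n) ℚ_[(p : ℕ)])ˣ,
        g l ∈ K'l → (∀ p : Nat.Primes, p ≠ l → g p ∈ K p) → IsNeatElem n ι g :=
  stmt_2_general n ι K hKopen
end

section
/- Let G be a group, K a subgroup of G, I a subgroup of K, and m an element of G. If the indices [K : I] and [K : K ∩ mKm⁻¹] are finite, then the index [I : I ∩ mIm⁻¹] is finite and satisfies [I : I ∩ mIm⁻¹] ≤ [K : K ∩ mKm⁻¹] · [K : I]. -/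
/-- For a subgroup `H` of `G` and `m : G`, the conjugate subgroup `mHm⁻¹`. -/
def conjSubgroup {G : Type*} [Group G] (m : G) (H : Subgroup G) : Subgroup G :=
  H.map (MulAut.conj m).toMonoidHom

/-! Conjugation by `m` preserves relative indices, so `[mKm⁻¹ : mIm⁻¹] = [K : I]`, and
`[I : I ∩ mIm⁻¹] = [I : mIm⁻¹]`. Going down from `I` to `mIm⁻¹` through `I ∩ mKm⁻¹` gives
`[I : mIm⁻¹] = [I ∩ mKm⁻¹ : mIm⁻¹] · [I : I ∩ mKm⁻¹] ≤ [mKm⁻¹ : mIm⁻¹] · [K : K ∩ mKm⁻¹]`. -/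

theorem relIndex_conjSubgroup {G : Type*} [Group G] (m : G) (H K : Subgroup G) :
    (conjSubgroup m H).relIndex (conjSubgroup m K) = H.relIndex K :=
  Subgroup.relIndex_map_map_of_injective H K (MulAut.conj m).injective

namespace Subgroup

variable {G : Type*} [Group G] {H K L L' : Subgroup G}

theorem relIndex_ne_zero_trans_of_le (hLL' : L ≤ L') (hH : H.relIndex K ≠ 0)
    (hK : K.relIndex L' ≠ 0) : H.relIndex L ≠ 0 :=
  mt (relIndex_eq_zero_of_le_right hLL') (relIndex_ne_zero_trans hH hK)

theorem relIndex_le_mul_relIndex_of_le (hHK : H ≤ K) (hLL' : L ≤ L') (hH : H.relIndex K ≠ 0)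
    (hK : K.relIndex L' ≠ 0) : H.relIndex L ≤ K.relIndex L' * H.relIndex K :=
  calc H.relIndex L = H.relIndex (K ⊓ L) * K.relIndex L := by
        rw [relIndex_inf_mul_relIndex, inf_of_le_left hHK]
    _ ≤ H.relIndex K * K.relIndex L' :=
        Nat.mul_le_mul (relIndex_le_of_le_right inf_le_left hH) (relIndex_le_of_le_right hLL' hK)
    _ = K.relIndex L' * H.relIndex K := mul_comm _ _

end Subgroup

/-- Let `G` be a group, `K` a subgroup of `G`, `I` a subgroup of `K`, and `m ∈ G`.
If the indices `[K : I]` and `[K : K ∩ mKm⁻¹]` are finite, then `[I : I ∩ mIm⁻¹]` is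
finite and `[I : I ∩ mIm⁻¹] ≤ [K : K ∩ mKm⁻¹] · [K : I]`. -/
theorem stmt_4 {G : Type*} [Group G] (K I : Subgroup G) (hIK : I ≤ K) (m : G)
    (hfin₁ : I.relIndex K ≠ 0)
    (hfin₂ : (K ⊓ conjSubgroup m K).relIndex K ≠ 0) :
    (I ⊓ conjSubgroup m I).relIndex I ≠ 0 ∧
      (I ⊓ conjSubgroup m I).relIndex I ≤
        (K ⊓ conjSubgroup m K).relIndex K * I.relIndex K := by
  have hconj : conjSubgroup m I ≤ conjSubgroup m K := Subgroup.map_mono hIK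
  rw [← relIndex_conjSubgroup m] at hfin₁
  rw [Subgroup.inf_relIndex_left] at hfin₂ ⊢
  rw [Subgroup.inf_relIndex_left, ← relIndex_conjSubgroup m I K]
  exact ⟨Subgroup.relIndex_ne_zero_trans_of_le hIK hfin₁ hfin₂,
    Subgroup.relIndex_le_mul_relIndex_of_le hconj hIK hfin₁ hfin₂⟩
end
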